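/- (Derivative of the temporal Godunov–Boillat potential with respect to ũ.) At every state Υ with θ̃ < 0, the gradient of X⁰ with respect to the vector variable ũ ∈ ℝ³ equals p̂_ψ(θ, ψ(Υ)) · ũ (which equals ρu with u = θũ, by the identity p̂_ψ = ρθ). -/

import Mathlib

/-! Only the kinetic term `½θ|ũ|²` of `ψ` depends on `ũ_k`, with derivative `θ ũ_k`; the chain
rule through `p̂(θ, ·)` gives `p̂_ψ θ ũ_k`, and the factor `θ ≠ 0` cancels against the division
by `θ` in `X⁰`. -/

noncomputable section

/-- The extended thermodynamical potential
`ψ(Υ) = ψ̃ + ½θ|ũ|² + ½τ₁‖Σ̃‖² + ½τ₂σ̃² + ½τ₀|q̃|²` with `θ = -1/θ̃`. -/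
def psiVal (τ0 τ1 τ2 : ℝ) (ψt : ℝ) (ut : Fin 3 → ℝ) (θt : ℝ)
    (St : Matrix (Fin 3) (Fin 3) ℝ) (σt : ℝ) (qt : Fin 3 → ℝ) : ℝ :=
  ψt + (1/2) * (-1/θt) * (∑ i, (ut i)^2) + (1/2) * τ1 * (∑ j, ∑ k, (St j k)^2)
    + (1/2) * τ2 * σt^2 + (1/2) * τ0 * (∑ i, (qt i)^2)

/-- The temporal Godunov–Boillat potential `X⁰(Υ) = p̂(θ, ψ(Υ))/θ`, `θ = -1/θ̃`. -/
def X0 (phat : ℝ × ℝ → ℝ) (τ0 τ1 τ2 : ℝ) (ψt : ℝ) (ut : Fin 3 → ℝ) (θt : ℝ)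
    (St : Matrix (Fin 3) (Fin 3) ℝ) (σt : ℝ) (qt : Fin 3 → ℝ) : ℝ :=
  phat (-1/θt, psiVal τ0 τ1 τ2 ψt ut θt St σt qt) / (-1/θt)

/-- The spatial Godunov–Boillat potential
`X¹(Υ) = p̂(θ, ψ(Υ)) ũ₁ + θ((Σ̃ũ)₁ + σ̃ũ₁ + q̃₁)`, `θ = -1/θ̃`. -/
def X1 (phat : ℝ × ℝ → ℝ) (τ0 τ1 τ2 : ℝ) (ψt : ℝ) (ut : Fin 3 → ℝ) (θt : ℝ)
    (St : Matrix (Fin 3) (Fin 3) ℝ) (σt : ℝ) (qt : Fin 3 → ℝ) : ℝ :=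
  phat (-1/θt, psiVal τ0 τ1 τ2 ψt ut θt St σt qt) * ut 0
    + (-1/θt) * ((∑ j, St 0 j * ut j) + σt * ut 0 + qt 0)

/-- Partial derivative `p̂_ψ` of `p̂` with respect to its second slot. -/
def pPsi (phat : ℝ × ℝ → ℝ) (a b : ℝ) : ℝ := deriv (fun s => phat (a, s)) b

/-- Partial derivative `p̂_θ` of `p̂` with respect to its first slot. -/
def pTheta (phat : ℝ × ℝ → ℝ) (a b : ℝ) : ℝ := deriv (fun t => phat (t, b)) a

theorem hasDerivAt_sum_sq_update {ι : Type*} [Fintype ι] [DecidableEq ι] (u : ι → ℝ) (k : ι)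
    (x : ℝ) : HasDerivAt (fun s => ∑ i, Function.update u k s i ^ 2) (2 * x) x :=
  (HasDerivAt.fun_sum fun i _ => (hasDerivAt_pi.1 (hasDerivAt_update u k x) i).fun_pow 2)
    |>.congr_deriv (by simp [Pi.single_apply])

theorem hasDerivAt_psiVal_update (τ0 τ1 τ2 ψt : ℝ) (ut : Fin 3 → ℝ) (θt : ℝ)
    (St : Matrix (Fin 3) (Fin 3) ℝ) (σt : ℝ) (qt : Fin 3 → ℝ) (k : Fin 3) (x : ℝ) :
    HasDerivAt (fun s => psiVal τ0 τ1 τ2 ψt (Function.update ut k s) θt St σt qt)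
      (-1/θt * x) x :=
  (((((hasDerivAt_sum_sq_update ut k x).const_mul (1/2 * (-1/θt))).const_add ψt).add_const
    (1/2 * τ1 * ∑ j, ∑ k, St j k ^ 2)).add_const (1/2 * τ2 * σt ^ 2)
    |>.add_const (1/2 * τ0 * ∑ i, qt i ^ 2)).congr_deriv (by ring)

theorem hasDerivAt_pPsi_comp {f : ℝ × ℝ → ℝ} {a : ℝ} {g : ℝ → ℝ} {g' x : ℝ}
    (hf : DifferentiableAt ℝ f (a, g x)) (hg : HasDerivAt g g' x) :
    HasDerivAt (fun s => f (a, g s)) (pPsi f a (g x) * g') x :=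
  (hf.comp (g x) ((differentiableAt_const a).prodMk differentiableAt_id)).hasDerivAt.comp x hg

theorem X0_deriv_uTilde
    (phat : ℝ × ℝ → ℝ) (hp : ContDiff ℝ 2 phat)
    (τ0 τ1 τ2 : ℝ)
    (ψt : ℝ) (ut : Fin 3 → ℝ) (θt : ℝ) (St : Matrix (Fin 3) (Fin 3) ℝ)
    (σt : ℝ) (qt : Fin 3 → ℝ) (hθ : θt < 0) :
    ∀ k : Fin 3,
      HasDerivAt (fun s => X0 phat τ0 τ1 τ2 ψt (Function.update ut k s) θt St σt qt)
        (pPsi phat (-1/θt) (psiVal τ0 τ1 τ2 ψt ut θt St σt qt) * ut k) (ut k) := by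
  intro k
  have h := (hasDerivAt_pPsi_comp (a := -1/θt) (hp.contDiffAt.differentiableAt (by norm_num))
    (hasDerivAt_psiVal_update τ0 τ1 τ2 ψt ut θt St σt qt k (ut k))).div_const (-1/θt)
  rw [Function.update_eq_self] at h
  exact h.congr_deriv (by field_simp [hθ.ne])

end
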